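/- The set T = {(C₁, C₂, C₃) : each Cᵢ is a purely imaginary unit quaternion and C₁C₂C₃ = 1} is nonempty (it contains (𝐢, 𝐣, −𝐤)), and the group of unit quaternions acts transitively on T by simultaneous conjugation. Equivalently, the quotient of T by simultaneous conjugation — the traceless character variety 𝓜₀,₃ of the three-punctured sphere — consists of a single point. -/

import Mathlib

/-!
Writing `(u, v, w)` for a point of `T`, the relations `u² = v² = -1` and `w = (uv)⁻¹ = vu`
together with `w` being purely imaginary force `uv = -vu`, so `1, u, v, uv` satisfy the
multiplication table of `1, 𝐢, 𝐣, 𝐤`. By Skolem–Noether this quaternion basis is conjugate to the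
standard one: averaging `x ↦ ∑ₑ φ(e) x e⁻¹` over `e ∈ {1, 𝐢, 𝐣, 𝐤}` produces a nonzero `D` with
`uD = D𝐢` and `vD = D𝐣`, hence `wD = D(-𝐤)`. So every point of `T` is conjugate to `(𝐢, 𝐣, -𝐤)`.
-/

open Quaternion

noncomputable def qi : ℍ[ℝ] := ⟨0, 1, 0, 0⟩
noncomputable def qj : ℍ[ℝ] := ⟨0, 0, 1, 0⟩
noncomputable def qk : ℍ[ℝ] := ⟨0, 0, 0, 1⟩

/-- The set of triples of purely imaginary unit quaternions with product `1`. -/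
def Tset : Set (ℍ[ℝ] × ℍ[ℝ] × ℍ[ℝ]) :=
  {C | (‖C.1‖ = 1 ∧ C.1.re = 0) ∧ (‖C.2.1‖ = 1 ∧ C.2.1.re = 0) ∧
    (‖C.2.2‖ = 1 ∧ C.2.2.re = 0) ∧ C.1 * C.2.1 * C.2.2 = 1}

@[simp] lemma qi_re : qi.re = 0 := rfl
@[simp] lemma qi_imI : qi.imI = 1 := rfl
@[simp] lemma qi_imJ : qi.imJ = 0 := rfl
@[simp] lemma qi_imK : qi.imK = 0 := rfl
@[simp] lemma qj_re : qj.re = 0 := rfl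
@[simp] lemma qj_imI : qj.imI = 0 := rfl
@[simp] lemma qj_imJ : qj.imJ = 1 := rfl
@[simp] lemma qj_imK : qj.imK = 0 := rfl
@[simp] lemma qk_re : qk.re = 0 := rfl
@[simp] lemma qk_imI : qk.imI = 0 := rfl
@[simp] lemma qk_imJ : qk.imJ = 0 := rfl
@[simp] lemma qk_imK : qk.imK = 1 := rfl

lemma qj_mul_qi : qj * qi = -qk := by
  ext <;> simp

lemma qi_mul_qj_mul_neg_qk : qi * qj * -qk = 1 := by
  ext <;> simp

lemma Quaternion.norm_eq_one_iff_normSq_eq_one {a : ℍ[ℝ]} : ‖a‖ = 1 ↔ normSq a = 1 := by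
  rw [norm_eq_sqrt_real_inner, inner_self, Real.sqrt_eq_one]

lemma Quaternion.mul_self_eq_neg_one {u : ℍ[ℝ]} (hu1 : ‖u‖ = 1) (hu0 : u.re = 0) :
    u * u = -1 := by
  rw [← sq, sq_eq_neg_normSq.mpr hu0, norm_eq_one_iff_normSq_eq_one.mp hu1, coe_one]

lemma inv_eq_neg_of_mul_self_eq_neg_one {R : Type*} [DivisionRing R] {u : R} (hu : u * u = -1) :
    u⁻¹ = -u :=
  inv_eq_of_mul_eq_one_right (by rw [mul_neg, hu, neg_neg])

lemma conj_mul_inv_eq_of_mul_eq {G : Type*} [GroupWithZero G] {D D' a c c' : G} (hD : D ≠ 0)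
    (hD' : D' ≠ 0) (h : c * D = D * a) (h' : c' * D' = D' * a) :
    D' * D⁻¹ * c * (D' * D⁻¹)⁻¹ = c' := by
  rw [← mul_inv_cancel_right₀ hD c, h, ← mul_inv_cancel_right₀ hD' c', h']
  simp [mul_assoc, hD]

lemma Tset.snd_snd_eq_snd_fst_mul_fst {C : ℍ[ℝ] × ℍ[ℝ] × ℍ[ℝ]} (hC : C ∈ Tset) :
    C.2.2 = C.2.1 * C.1 := by
  obtain ⟨⟨hu1, hu0⟩, ⟨hv1, hv0⟩, -, hprod⟩ := hC
  rw [eq_inv_of_mul_eq_one_right hprod, mul_inv_rev,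
    inv_eq_neg_of_mul_self_eq_neg_one (mul_self_eq_neg_one hu1 hu0),
    inv_eq_neg_of_mul_self_eq_neg_one (mul_self_eq_neg_one hv1 hv0), neg_mul_neg]

lemma Tset.snd_fst_mul_fst_eq_neg {C : ℍ[ℝ] × ℍ[ℝ] × ℍ[ℝ]} (hC : C ∈ Tset) :
    C.2.1 * C.1 = -(C.1 * C.2.1) := by
  have hw : star C.2.2 = -C.2.2 := star_eq_neg.mpr hC.2.2.1.2
  rw [Tset.snd_snd_eq_snd_fst_mul_fst hC, star_mul, star_eq_neg.mpr hC.1.2,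
    star_eq_neg.mpr hC.2.1.2, neg_mul_neg] at hw
  rw [hw, neg_neg]

/-- The Skolem–Noether average `∑ₑ φ(e) x e⁻¹` over `e ∈ {1, 𝐢, 𝐣, 𝐤}`, where `φ` sends
`𝐢, 𝐣, 𝐤` to `u, v, uv`. -/
noncomputable def intertwiner (u v x : ℍ[ℝ]) : ℍ[ℝ] :=
  x - u * x * qi - v * x * qj - u * v * x * qk

lemma mul_intertwiner_sub_intertwiner_mul_qi (u v x : ℍ[ℝ]) :
    u * intertwiner u v x - intertwiner u v x * qi = -(u * u + 1) * (x * qi + v * x * qk) := by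
  ext <;> simp [intertwiner] <;> ring

lemma mul_intertwiner_sub_intertwiner_mul_qj (u v x : ℍ[ℝ]) :
    v * intertwiner u v x - intertwiner u v x * qj =
      -((v * v + 1) * (x * qj)) - (v * u + u * v) * x * qi + (u - v * u * v) * (x * qk) := by
  ext <;> simp [intertwiner] <;> ring

lemma intertwiner_basis_sum_eq_four (u v : ℍ[ℝ]) : intertwiner u v 1 - intertwiner u v qi * qi -
    intertwiner u v qj * qj - intertwiner u v qk * qk = ((4 : ℝ) : ℍ[ℝ]) := by
  ext <;> simp [intertwiner] <;> ring

lemma mul_intertwiner_eq_intertwiner_mul_qi {u : ℍ[ℝ]} (v : ℍ[ℝ]) (hu : u * u = -1) (x : ℍ[ℝ]) :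
    u * intertwiner u v x = intertwiner u v x * qi := by
  simpa [hu, sub_eq_zero] using mul_intertwiner_sub_intertwiner_mul_qi u v x

lemma mul_intertwiner_eq_intertwiner_mul_qj {u v : ℍ[ℝ]} (hv : v * v = -1) (huv : v * u = -(u * v))
    (x : ℍ[ℝ]) : v * intertwiner u v x = intertwiner u v x * qj := by
  have hvuv : v * u * v = u := by rw [huv, neg_mul, mul_assoc, hv, mul_neg_one, neg_neg]
  have h := mul_intertwiner_sub_intertwiner_mul_qj u v x
  rw [hvuv, huv, hv] at h
  simpa [sub_eq_zero] using h

lemma exists_intertwiner_ne_zero (u v : ℍ[ℝ]) : ∃ x, intertwiner u v x ≠ 0 := by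
  by_contra! h
  have h4 := intertwiner_basis_sum_eq_four u v
  simp only [h, zero_mul, sub_zero] at h4
  exact coe_injective.ne four_ne_zero h4.symm

lemma exists_norm_one_intertwining {u v : ℍ[ℝ]} (hu : u * u = -1) (hv : v * v = -1)
    (huv : v * u = -(u * v)) : ∃ D : ℍ[ℝ], ‖D‖ = 1 ∧ u * D = D * qi ∧ v * D = D * qj := by
  obtain ⟨x, hx⟩ := exists_intertwiner_ne_zero u v
  refine ⟨(‖intertwiner u v x‖⁻¹ : ℝ) • intertwiner u v x, norm_smul_inv_norm hx, ?_, ?_⟩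
  · rw [mul_smul_comm, mul_intertwiner_eq_intertwiner_mul_qi v hu, smul_mul_assoc]
  · rw [mul_smul_comm, mul_intertwiner_eq_intertwiner_mul_qj hv huv, smul_mul_assoc]

lemma Tset.exists_norm_one_conj_base {C : ℍ[ℝ] × ℍ[ℝ] × ℍ[ℝ]} (hC : C ∈ Tset) :
    ∃ D : ℍ[ℝ], ‖D‖ = 1 ∧ C.1 * D = D * qi ∧ C.2.1 * D = D * qj ∧ C.2.2 * D = D * -qk := by
  obtain ⟨D, hD, hDi, hDj⟩ := exists_norm_one_intertwining
    (mul_self_eq_neg_one hC.1.1 hC.1.2) (mul_self_eq_neg_one hC.2.1.1 hC.2.1.2)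
    (Tset.snd_fst_mul_fst_eq_neg hC)
  refine ⟨D, hD, hDi, hDj, ?_⟩
  rw [Tset.snd_snd_eq_snd_fst_mul_fst hC, mul_assoc, hDi, ← mul_assoc, hDj, mul_assoc, qj_mul_qi]

lemma base_mem_Tset : (qi, qj, -qk) ∈ Tset := by
  refine ⟨⟨?_, qi_re⟩, ⟨?_, qj_re⟩, ⟨?_, by simp⟩, qi_mul_qj_mul_neg_qk⟩ <;>
    simp [norm_eq_one_iff_normSq_eq_one, normSq_def']

/-- `T` is nonempty (it contains `(𝐢, 𝐣, −𝐤)`) and the unit quaternions act transitively on it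
by simultaneous conjugation; hence the traceless character variety `𝓜₀,₃` is a single point. -/
theorem traceless_character_variety_of_sphere_is_point :
    (qi, qj, -qk) ∈ Tset ∧
      ∀ C ∈ Tset, ∀ C' ∈ Tset, ∃ D : ℍ[ℝ], ‖D‖ = 1 ∧
        D * C.1 * D⁻¹ = C'.1 ∧ D * C.2.1 * D⁻¹ = C'.2.1 ∧ D * C.2.2 * D⁻¹ = C'.2.2 := by
  refine ⟨base_mem_Tset, fun C hC C' hC' => ?_⟩
  obtain ⟨D, hD, hD₁, hD₂, hD₃⟩ := Tset.exists_norm_one_conj_base hC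
  obtain ⟨D', hD', hD'₁, hD'₂, hD'₃⟩ := Tset.exists_norm_one_conj_base hC'
  have hD0 : D ≠ 0 := ne_zero_of_norm_ne_zero (by simp [hD])
  have hD'0 : D' ≠ 0 := ne_zero_of_norm_ne_zero (by simp [hD'])
  exact ⟨D' * D⁻¹, by rw [norm_mul, norm_inv, hD, hD', inv_one, mul_one],
    conj_mul_inv_eq_of_mul_eq hD0 hD'0 hD₁ hD'₁, conj_mul_inv_eq_of_mul_eq hD0 hD'0 hD₂ hD'₂,
    conj_mul_inv_eq_of_mul_eq hD0 hD'0 hD₃ hD'₃⟩
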